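/- arXiv:1211.4468 — 4 statements merged into one kernel-verified Lean document; each statement's English description precedes it below -/
import Mathlib

section
/- For any integer n ≥ 1, lcm(1, 2, ..., n) ≥ 2^(n-1). -/
/-!
Nair's argument. The beta integral `∫₀¹ xᵏ (1 - x)ᵐ dx` equals both
`∑ᵢ (-1)ⁱ C(m, i) / (k + 1 + i)` and `m! k! / (m + k + 1)!`. Multiplying the sum by a common
multiple `L` of `k + 1, …, m + k + 1` gives an integer, so `(m + k + 1) C(m + k, k) ∣ L`.
With `m + k = n - 1` and `k = (n - 1) / 2` this bounds `lcm(1, …, n)` below by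
`n C(n - 1, (n - 1) / 2) ≥ 2 ^ (n - 1)`, the largest of the `n` binomial coefficients
summing to `2 ^ (n - 1)`.
-/

open Finset Nat

theorem sum_range_choose_mul_neg_one_pow_div {K : Type*} [Field K] [CharZero K] (m k : ℕ) :
    ∑ i ∈ range (m + 1), (m.choose i : K) * ((-1) ^ i / (k + 1 + i)) =
      m ! * k ! / (m + k + 1)! := by
  induction m generalizing k with
  | zero =>
    have : (k ! : K) ≠ 0 := Nat.cast_ne_zero.2 k.factorial_ne_zero
    simp [Nat.factorial_succ]
    field_simp
  | succ m ih =>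
    have shift : ∑ i ∈ range (m + 1), (m.choose i : K) * ((-1) ^ (i + 1) / (k + 1 + (i + 1 : ℕ))) =
        -∑ i ∈ range (m + 1), (m.choose i : K) * ((-1) ^ i / ((k + 1 : ℕ) + 1 + i)) := by
      rw [← sum_neg_distrib]
      refine sum_congr rfl fun i _ ↦ ?_
      push_cast
      ring
    rw [sum_choose_succ_mul (fun i _ ↦ (-1 : K) ^ i / (k + 1 + i)), shift, ih, ih,
      show m + 1 + k + 1 = m + k + 1 + 1 by ring, show m + (k + 1) + 1 = m + k + 1 + 1 by ring,
      Nat.factorial_succ (m + k + 1), Nat.factorial_succ m, Nat.factorial_succ k]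
    have hfact : ((m + k + 1)! : K) ≠ 0 := Nat.cast_ne_zero.2 (m + k + 1).factorial_ne_zero
    have hsucc : ((m + k + 1 : ℕ) : K) + 1 ≠ 0 := Nat.cast_add_one_ne_zero _
    push_cast at hfact hsucc ⊢
    field_simp
    ring

theorem succ_mul_choose_dvd_of_forall_dvd {n k L : ℕ} (hk : k ≤ n)
    (hL : ∀ j ∈ Icc (k + 1) (n + 1), j ∣ L) : (n + 1) * n.choose k ∣ L := by
  obtain ⟨m, rfl⟩ := Nat.exists_eq_add_of_le' hk
  have hdiv (i : ℕ) (hi : i ∈ range (m + 1)) : k + 1 + i ∣ L :=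
    hL _ (mem_Icc.2 ⟨by omega, by simp at hi; omega⟩)
  obtain ⟨z, hz⟩ : ∃ z : ℤ, (z : ℚ) = L * (m ! * k ! / (m + k + 1)!) := by
    refine ⟨∑ i ∈ range (m + 1), m.choose i * (-1) ^ i * ((L / (k + 1 + i) : ℕ) : ℤ), ?_⟩
    rw [← sum_range_choose_mul_neg_one_pow_div (K := ℚ), mul_sum, Int.cast_sum]
    refine sum_congr rfl fun i hi ↦ ?_
    rw [Int.cast_mul, Int.cast_natCast, Nat.cast_div (hdiv i hi) (by positivity)]
    push_cast
    ring
  have hfact : ((m + k + 1 : ℕ) : ℚ) * (m + k).choose k * m ! * k ! = (m + k + 1)! := by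
    rw [Nat.factorial_succ, ← Nat.add_choose_mul_factorial_mul_factorial]
    push_cast
    ring
  have hLz : (L : ℤ) = ((m + k + 1) * (m + k).choose k : ℕ) * z := by
    suffices (L : ℚ) = ((m + k + 1) * (m + k).choose k : ℕ) * z by exact_mod_cast this
    rw [hz, ← hfact]
    have : ((m + k).choose k : ℚ) ≠ 0 := Nat.cast_ne_zero.2 (Nat.choose_pos hk).ne'
    have : (m ! : ℚ) ≠ 0 := Nat.cast_ne_zero.2 m.factorial_ne_zero
    have : (k ! : ℚ) ≠ 0 := Nat.cast_ne_zero.2 k.factorial_ne_zero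
    push_cast
    field_simp
  exact Int.natCast_dvd_natCast.1 ⟨z, hLz⟩

theorem two_pow_le_succ_mul_choose_half (n : ℕ) : 2 ^ n ≤ (n + 1) * n.choose (n / 2) :=
  calc 2 ^ n = ∑ i ∈ range (n + 1), n.choose i := (sum_range_choose n).symm
    _ ≤ ∑ _i ∈ range (n + 1), n.choose (n / 2) := sum_le_sum fun i _ ↦ choose_le_middle i n
    _ = (n + 1) * n.choose (n / 2) := by rw [sum_const, card_range, smul_eq_mul]

theorem lcm_range_ge_two_pow (n : ℕ) (hn : 1 ≤ n) :
    Finset.lcm (Finset.Icc 1 n) id ≥ 2 ^ (n - 1) := by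
  obtain ⟨n, rfl⟩ := Nat.exists_eq_add_of_le' hn
  have hdvd (j : ℕ) (hj : j ∈ Icc 1 (n + 1)) : j ∣ (Icc 1 (n + 1)).lcm id := dvd_lcm hj
  have hpos : 0 < (Icc 1 (n + 1)).lcm id :=
    Nat.pos_of_ne_zero fun h ↦ by simpa using Finset.lcm_eq_zero_iff.1 h
  calc 2 ^ (n + 1 - 1) = 2 ^ n := rfl
    _ ≤ (n + 1) * n.choose (n / 2) := two_pow_le_succ_mul_choose_half n
    _ ≤ (Icc 1 (n + 1)).lcm id := Nat.le_of_dvd hpos <|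
      succ_mul_choose_dvd_of_forall_dvd (n.div_le_self 2) fun j hj ↦
        hdvd j (mem_Icc.2 ⟨by simp at hj; omega, (mem_Icc.1 hj).2⟩)
end

section
/- Let a, l ≥ 2 be integers. For any integers α ≥ a, r ≥ max(a, l-1), and n ≥ l·α·r, we have n - k_n > ((l-1)·α + a - l)·r. -/
/-!
Since `u₀ ≥ 1`, the floor in `k_n` is at most `(n - 1)/(r + 1)`, so `n - k_n ≥ (n - 1) r/(r + 1)`
and it suffices that `n > C (r + 1) + 1` for `C = (l - 1) α + a - l`. With `n ≥ l α r` this is the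
polynomial inequality `C (r + 1) + 1 < l α r`, whose slack is `(α - a)(r - l + 1) + l (r - a + 1) - 1`.
-/

theorem Int.fdiv_mul_le_of_pos {m d : ℤ} (hd : 0 < d) : Int.fdiv m d * d ≤ m := by
  rw [Int.fdiv_eq_ediv_of_nonneg _ hd.le]
  exact Int.ediv_mul_le _ hd.ne'

theorem sub_max_zero_fdiv_add_one_gt {n u r C : ℤ} (hr : 0 < r) (hu : 1 ≤ u) (hC : 0 ≤ C)
    (hn : C * (r + 1) + 1 < n) :
    n - max 0 (Int.fdiv (n - u) (r + 1) + 1) > C * r := by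
  have hq : Int.fdiv (n - u) (r + 1) * (r + 1) ≤ n - u := Int.fdiv_mul_le_of_pos (by omega)
  suffices max 0 (Int.fdiv (n - u) (r + 1) + 1) < n - C * r by linarith
  refine max_lt (by nlinarith) (lt_of_mul_lt_mul_right ?_ (by omega : (0 : ℤ) ≤ r + 1))
  nlinarith [mul_lt_mul_of_pos_left hn hr]

theorem coeff_mul_succ_add_one_lt {a l α r : ℤ} (hl : 2 ≤ l) (hα : a ≤ α) (hra : a ≤ r)
    (hrl : l - 1 ≤ r) :
    ((l - 1) * α + a - l) * (r + 1) + 1 < l * α * r := by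
  nlinarith [mul_nonneg (sub_nonneg.mpr hα) (by linarith : (0 : ℤ) ≤ r - l + 1)]

theorem n_sub_kn_gt (a l α r n u0 : ℕ) (ha : 2 ≤ a) (hl : 2 ≤ l)
    (hα : a ≤ α) (hr : max a (l - 1) ≤ r) (hn : l * α * r ≤ n) (hu0 : 0 < u0) :
    let kn : ℤ := max 0 (Int.fdiv ((n : ℤ) - (u0 : ℤ)) ((r : ℤ) + 1) + 1)
    (n : ℤ) - kn > (((l : ℤ) - 1) * (α : ℤ) + (a : ℤ) - (l : ℤ)) * (r : ℤ) := by
  obtain ⟨hra, hrl⟩ := max_le_iff.mp hr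
  have hn' : (l : ℤ) * α * r ≤ n := by exact_mod_cast hn
  have hC : (0 : ℤ) ≤ ((l : ℤ) - 1) * α + a - l := by nlinarith
  exact sub_max_zero_fdiv_add_one_gt (by omega) (by omega) hC
    ((coeff_mul_succ_add_one_lt (by omega) (by omega) (by omega) (by omega)).trans_le hn')
end

section
/- Let a, l ≥ 2 be integers. For any integers α ≥ a, r ≥ max(a, l-1), and n ≥ l·α·r, we have L_n ≥ u_0 · r^((l-1)·α + a - l) · (r+1)^n. -/
/-!
For `u > 0` the `m`-th forward difference with step `r` of `x ↦ 1/x` at `u` is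
`(-1)^m m! r^m / ∏_{j ≤ m} (u + j r)`; multiplied by `lcm_{j ≤ m} (u + j r)` it becomes an
integer combination of the quotients `lcm / (u + j r)`. Hence `u_k ⋯ u_n ∣ (n - k)! r^(n - k) L_n`,
and since every `u_j` is prime to `r` while `r^⌊m/r⌋ ∣ m!`, even
`u_k ⋯ u_n · r^⌊(n-k)/r⌋ ∣ (n - k)! L_n`.

Raising `k` by one exactly when `n` passes `u_0 + k (r + 1)`, an induction on `n` gives
`u_k ⋯ u_n ≥ u_0 (r + 1)^n (n - k)!` with `k (r + 1) ≤ n + r`. So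
`L_n ≥ u_0 (r + 1)^n r^⌊(n-k)/r⌋`, and `n ≥ l α r` makes `⌊(n - k)/r⌋ ≥ (l - 1) α + a - l`.
-/

open Finset fwdDiff
open scoped Nat

lemma fwdDiff_iter_inv_apply {K : Type*} [Field K] [LinearOrder K] [IsStrictOrderedRing K]
    {u r : K} (hu : 0 < u) (hr : 0 ≤ r) (m : ℕ) :
    (Δ_[r])^[m] (fun x : K => x⁻¹) u =
      (-1) ^ m * m ! * r ^ m / ∏ j ∈ range (m + 1), (u + j * r) := by
  induction m generalizing u with
  | zero => simp
  | succ m ih =>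
    have hpos : ∀ v : K, 0 < v → 0 < ∏ j ∈ range (m + 1), (v + j * r) := fun v hv =>
      prod_pos fun j _ => by positivity
    have hshift : (∏ j ∈ range (m + 1), (u + r + j * r)) * u
        = (∏ j ∈ range (m + 1), (u + j * r)) * (u + (m + 1) * r) := by
      have h := prod_range_succ' (fun j : ℕ => u + j * r) (m + 1)
      rw [prod_range_succ] at h
      push_cast at h
      rw [h, zero_mul, add_zero]
      congr 1
      exact prod_congr rfl fun j _ => by ring
    rw [Function.iterate_succ_apply', fwdDiff, ih (by positivity), ih hu,
      prod_range_succ (fun j : ℕ => u + j * r) (m + 1),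
      div_sub_div _ _ (hpos _ (by positivity)).ne' (hpos u hu).ne',
      div_eq_div_iff (mul_pos (hpos _ (by positivity)) (hpos u hu)).ne'
        (mul_pos (hpos u hu) (by positivity)).ne', Nat.factorial_succ]
    push_cast
    linear_combination (-((-1) ^ m * m ! * r ^ m * ∏ j ∈ range (m + 1), (u + j * r))) * hshift

lemma prod_dvd_factorial_mul_pow_mul_lcm (u r m : ℕ) (hu : 0 < u) :
    ∏ j ∈ range (m + 1), (u + j * r) ∣
      m ! * r ^ m * (range (m + 1)).lcm (fun j => u + j * r) := by
  set L := (range (m + 1)).lcm (fun j => u + j * r)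
  have hterm (k : ℕ) (hk : k ∈ range (m + 1)) :
      ((L / (u + k * r) : ℕ) : ℚ) = L / (u + k * r) := by
    rw [Nat.cast_div (dvd_lcm hk) (by positivity)]
    push_cast; rfl
  have hQ : (0 : ℚ) < ∏ j ∈ range (m + 1), ((u : ℚ) + j * r) :=
    prod_pos fun j _ => by positivity
  have hsum := fwdDiff_iter_inv_apply (u := (u : ℚ)) (r := r) (by positivity) (by positivity) m
  rw [fwdDiff_iter_eq_sum_shift] at hsum
  rw [← Int.natCast_dvd_natCast]
  -- the quotient is `(-1)^m L Δ^m (x ↦ 1/x) u`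
  refine ⟨(-1) ^ m *
    ∑ k ∈ range (m + 1), (-1) ^ (m - k) * m.choose k * ((L / (u + k * r) : ℕ) : ℤ), ?_⟩
  apply Int.cast_injective (α := ℚ)
  simp only [Int.cast_mul, Int.cast_pow, Int.cast_neg, Int.cast_one, Int.cast_sum,
    Int.cast_natCast, Nat.cast_mul, Nat.cast_pow, Nat.cast_prod, Nat.cast_add, Int.cast_prod,
    Int.cast_add]
  rw [sum_congr rfl fun k hk => by rw [hterm k hk, div_eq_mul_inv, mul_left_comm],
    ← mul_sum]
  simp only [zsmul_eq_mul, nsmul_eq_mul] at hsum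
  push_cast at hsum
  have hsign : (-1 : ℚ) ^ m * (-1) ^ m = 1 := by rw [← mul_pow]; norm_num
  rw [hsum, mul_div_assoc', mul_div_assoc', mul_div_assoc', mul_div_cancel_left₀ _ hQ.ne']
  linear_combination (-((L : ℚ) * m ! * r ^ m)) * hsign

lemma coprime_prod_add_mul (s : Finset ℕ) {u r : ℕ} (hcop : u.Coprime r) :
    (∏ j ∈ s, (u + j * r)).Coprime r :=
  Nat.Coprime.prod_left fun j _ => (Nat.coprime_add_mul_right_left u r j).2 hcop

lemma prod_dvd_factorial_mul_lcm (u r m : ℕ) (hu : 0 < u) (hcop : u.Coprime r) :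
    ∏ j ∈ range (m + 1), (u + j * r) ∣ m ! * (range (m + 1)).lcm (fun j => u + j * r) := by
  refine ((coprime_prod_add_mul _ hcop).pow_right m).dvd_of_dvd_mul_right ?_
  simpa only [mul_right_comm] using prod_dvd_factorial_mul_pow_mul_lcm u r m hu

lemma Nat.pow_div_dvd_factorial (r m : ℕ) : r ^ (m / r) ∣ m ! := by
  rcases Nat.eq_zero_or_pos r with rfl | hr
  · simp
  suffices h : ∀ t, r ^ t ∣ (t * r)! from
    (h _).trans (Nat.factorial_dvd_factorial (Nat.div_mul_le_self m r))
  intro t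
  induction t with
  | zero => simp
  | succ t ih =>
    rw [pow_succ, ← Nat.mul_factorial_pred (by positivity), mul_comm (r ^ t)]
    exact mul_dvd_mul (Dvd.intro_left (t + 1) rfl)
      (ih.trans (Nat.factorial_dvd_factorial (by rw [add_one_mul]; omega)))

lemma prod_Ico_mul_pow_dvd_factorial_mul_lcm {u r k n : ℕ} (hu : 0 < u) (hcop : u.Coprime r)
    (hkn : k ≤ n) :
    (∏ j ∈ Ico k (n + 1), (u + j * r)) * r ^ ((n - k) / r) ∣
      (n - k)! * (range (n + 1)).lcm (fun j => u + j * r) := by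
  set m := n - k
  have hprod :
      ∏ j ∈ Ico k (n + 1), (u + j * r) = ∏ j ∈ range (m + 1), (u + k * r + j * r) := by
    rw [prod_Ico_eq_prod_range, show n + 1 - k = m + 1 by omega]
    exact prod_congr rfl fun j _ => by ring
  have hlcm : (range (m + 1)).lcm (fun j => u + k * r + j * r) ∣
      (range (n + 1)).lcm (fun j => u + j * r) :=
    lcm_dvd fun j hj => by
      rw [add_assoc, ← add_mul]
      exact dvd_lcm (mem_range.2 (by rw [mem_range] at hj; omega))
  have hdvd :
      ∏ j ∈ Ico k (n + 1), (u + j * r) ∣ m ! * (range (n + 1)).lcm (fun j => u + j * r) :=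
    hprod ▸ (prod_dvd_factorial_mul_lcm _ r m (by positivity)
      ((Nat.coprime_add_mul_right_left u r k).2 hcop)).trans (mul_dvd_mul_left _ hlcm)
  obtain ⟨D, hD⟩ := Nat.pow_div_dvd_factorial r m
  rw [hD, mul_assoc] at hdvd ⊢
  rw [mul_comm]
  exact mul_dvd_mul_left _ (((coprime_prod_add_mul _ hcop).pow_right _).dvd_of_dvd_mul_left hdvd)

lemma exists_le_prod_Ico (u r n : ℕ) (hu : 0 < u) :
    ∃ k ≤ n, n ≤ u + k * (r + 1) ∧ k * (r + 1) ≤ n + r ∧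
      u * (r + 1) ^ n * (n - k)! ≤ ∏ j ∈ Ico k (n + 1), (u + j * r) := by
  induction n with
  | zero => exact ⟨0, le_rfl, by simp, by simp, by simp⟩
  | succ n ih =>
    obtain ⟨k, hkn, hcover, hsmall, hprod⟩ := ih
    -- either `k` stays and `u_{n+1} ≥ (r + 1) (n + 1 - k)`, or `n = u + k (r + 1)`, `k` moves up
    -- and `u_{n+1} ≥ (r + 1) u_k`
    by_cases hk : n + 1 ≤ u + k * (r + 1)
    · refine ⟨k, by omega, hk, by omega, ?_⟩
      have hstep : (r + 1) * (n - k + 1) ≤ u + (n + 1) * r := by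
        obtain ⟨m, rfl⟩ := Nat.exists_eq_add_of_le hkn
        rw [Nat.add_sub_cancel_left]
        nlinarith
      rw [prod_Ico_succ_top (by omega), Nat.succ_sub hkn, Nat.factorial_succ]
      calc u * (r + 1) ^ (n + 1) * ((n - k + 1) * (n - k)!)
          = u * (r + 1) ^ n * (n - k)! * ((r + 1) * (n - k + 1)) := by ring
        _ ≤ _ := Nat.mul_le_mul hprod hstep
    · have hn : n = u + k * (r + 1) := by omega
      refine ⟨k + 1, by omega, by rw [add_one_mul]; omega, by rw [add_one_mul]; omega, ?_⟩
      have hsplit : (u + k * r) * ∏ j ∈ Ico (k + 1) (n + 1 + 1), (u + j * r)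
          = (∏ j ∈ Ico k (n + 1), (u + j * r)) * (u + (n + 1) * r) :=
        (prod_eq_prod_Ico_succ_bot (by omega : k < n + 1 + 1) (fun j => u + j * r)).symm.trans
          (prod_Ico_succ_top (by omega : k ≤ n + 1) _)
      have hstep : (r + 1) * (u + k * r) ≤ u + (n + 1) * r := by
        rw [hn]; nlinarith
      refine Nat.le_of_mul_le_mul_left ?_ (show 0 < u + k * r by positivity)
      rw [hsplit, show n + 1 - (k + 1) = n - k by omega]
      calc (u + k * r) * (u * (r + 1) ^ (n + 1) * (n - k)!)
          = u * (r + 1) ^ n * (n - k)! * ((r + 1) * (u + k * r)) := by ring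
        _ ≤ _ := Nat.mul_le_mul hprod hstep

lemma mul_pow_le_lcm_of_mul_factorial_le {u r k n c : ℕ} (hu : 0 < u) (hcop : u.Coprime r)
    (hkn : k ≤ n) (hc : c * (n - k)! ≤ ∏ j ∈ Ico k (n + 1), (u + j * r)) :
    c * r ^ ((n - k) / r) ≤ (range (n + 1)).lcm (fun j => u + j * r) := by
  have hL : 0 < (range (n + 1)).lcm (fun j => u + j * r) :=
    Nat.pos_of_ne_zero (by simp only [Ne, Finset.lcm_eq_zero_iff]; omega)
  refine Nat.le_of_mul_le_mul_left ?_ (Nat.factorial_pos (n - k))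
  calc (n - k)! * (c * r ^ ((n - k) / r)) = c * (n - k)! * r ^ ((n - k) / r) := by ring
    _ ≤ (∏ j ∈ Ico k (n + 1), (u + j * r)) * r ^ ((n - k) / r) := Nat.mul_le_mul_right _ hc
    _ ≤ _ := Nat.le_of_dvd (by positivity)
      (prod_Ico_mul_pow_dvd_factorial_mul_lcm hu hcop hkn)

lemma exponent_mul_succ_lt {a l α r : ℕ} (ha : 2 ≤ a) (hl : 2 ≤ l) (hα : a ≤ α)
    (hr : max a (l - 1) ≤ r) : ((l - 1) * α + a - l) * (r + 1) < l * α * r := by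
  obtain ⟨l, rfl⟩ : ∃ l', l = l' + 1 := ⟨l - 1, by omega⟩
  rw [max_le_iff] at hr
  simp only [Nat.add_sub_cancel] at hr ⊢
  have hsub : l + 1 ≤ l * α + a := by nlinarith
  zify [hsub]
  nlinarith [mul_nonneg (sub_nonneg.2 (by exact_mod_cast hα : (a : ℤ) ≤ α))
    (sub_nonneg.2 (by exact_mod_cast hr.2 : (l : ℤ) ≤ r)),
    mul_nonneg (by positivity : (0 : ℤ) ≤ l + 1)
      (sub_nonneg.2 (by exact_mod_cast hr.1 : (a : ℤ) ≤ r))]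

lemma le_sub_div_of_mul_succ_lt {e k n r : ℕ} (hr : 0 < r) (he : e * (r + 1) < n)
    (hk : k * (r + 1) ≤ n + r) : e ≤ (n - k) / r := by
  rw [Nat.le_div_iff_mul_le hr]
  have : (e * r + k) * (r + 1) ≤ n * (r + 1) := by nlinarith
  have := Nat.le_of_mul_le_mul_right this (by omega)
  omega

theorem main_lower_bound (u0 r n a l α : ℕ) (hu0 : 0 < u0) (hr0 : 0 < r)
    (hgcd : Nat.gcd u0 r = 1) (ha : 2 ≤ a) (hl : 2 ≤ l) (hα : a ≤ α)
    (hr : max a (l - 1) ≤ r) (hn : l * α * r ≤ n) :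
    Finset.lcm (Finset.range (n + 1)) (fun k => u0 + k * r) ≥
      u0 * r ^ ((l - 1) * α + a - l) * (r + 1) ^ n := by
  obtain ⟨k, hkn, -, hk, hprod⟩ := exists_le_prod_Ico u0 r n hu0
  have hexp : (l - 1) * α + a - l ≤ (n - k) / r :=
    le_sub_div_of_mul_succ_lt hr0 ((exponent_mul_succ_lt ha hl hα hr).trans_le hn) hk
  calc u0 * r ^ ((l - 1) * α + a - l) * (r + 1) ^ n
      ≤ u0 * (r + 1) ^ n * r ^ ((n - k) / r) := by
        rw [mul_right_comm]
        exact Nat.mul_le_mul_left _ (Nat.pow_le_pow_right hr0 hexp)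
    _ ≤ _ := mul_pow_le_lcm_of_mul_factorial_le hu0 hgcd hkn hprod
end

section
/- Let a ≥ 2 be an integer. For any integers α, r ≥ a and n ≥ 2·α·r, we have L_n ≥ u_0 · r^(α + a - 2) · (r+1)^n. -/
open Finset Nat fwdDiff

/-!
For `x` coprime to `r`, multiplying the partial-fraction identity
`∑ i ≤ m, (-1)^i C(m,i) / (x + i r) = (-1)^m Δ^m (x + i r)⁻¹ = m! r^m / ∏ i ≤ m, (x + i r)` by
`M = lcm_{i ≤ m} (x + i r)` turns every term on the left into an integer, so `∏ (x + i r)`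
divides `m! r^m M`, hence `m! M` since the product is coprime to `r`. When `N r ≤ m`, also
`r^N ∣ m!`, so `∏ (x + i r) · r^N ∣ m! M`.

Apply this to a window `u_k, …, u_{k+m}` with `k + m = n`, chosen by induction on `n`: lengthen
it when `m < u_k` (then `(m + 1)(r + 1) ≤ u_{k+m+1}`), slide it by one when `u_k ≤ m` (then
`(r + 1) u_k ≤ u_{k+m+1}`). This keeps `m! · u_0 (r + 1)^n ≤ u_k ⋯ u_{k+m}` and
`r n < (r + 1) m + r`, which with `N (r + 1) ≤ 2 α r ≤ n` for `N = α + a - 2` forces `N r ≤ m`.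
-/

theorem fwdDiff_iter_inv_add_mul {K : Type*} [Field K] (x r : K) (hx : ∀ i : ℕ, x + i * r ≠ 0)
    (m y : ℕ) :
    (Δ_[1])^[m] (fun i : ℕ => (x + i * r)⁻¹) y =
      (-1) ^ m * m ! * r ^ m / ∏ i ∈ range (m + 1), (x + (y + i : ℕ) * r) := by
  induction m generalizing y with
  | zero => simp
  | succ m ih =>
    have hshift : (∏ i ∈ range (m + 1), (x + (y + i : ℕ) * r)) * (x + (y + (m + 1) : ℕ) * r) =
        (∏ i ∈ range (m + 1), (x + (y + 1 + i : ℕ) * r)) * (x + y * r) := by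
      rw [← prod_range_succ, prod_range_succ']
      congr 1
      exact prod_congr rfl fun i _ => by push_cast; ring
    have hP : ∀ z : ℕ, ∏ i ∈ range (m + 1), (x + (z + i : ℕ) * r) ≠ 0 :=
      fun z => prod_ne_zero_iff.mpr fun i _ => hx _
    rw [Function.iterate_succ_apply', fwdDiff, ih, ih, prod_range_succ _ (m + 1),
      div_sub_div _ _ (hP _) (hP _), div_eq_div_iff (mul_ne_zero (hP _) (hP _))
        (mul_ne_zero (hP _) (hx _)), factorial_succ]
    push_cast at hshift ⊢
    linear_combination (-1) ^ m * m ! * r ^ m * (∏ i ∈ range (m + 1), (x + (y + i) * r)) * hshift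

theorem pow_dvd_factorial_mul {r : ℕ} (hr : 0 < r) (N : ℕ) : r ^ N ∣ (N * r)! := by
  induction N with
  | zero => simp
  | succ N ih =>
    rw [pow_succ, succ_mul]
    exact (Nat.mul_dvd_mul ih (dvd_factorial hr le_rfl)).trans
      (factorial_mul_factorial_dvd_factorial_add _ _)

theorem Nat.Coprime.prod_add_mul_pow {x r : ℕ} (h : Coprime x r) (s : Finset ℕ) (N : ℕ) :
    Coprime (∏ i ∈ s, (x + i * r)) (r ^ N) :=
  Coprime.pow_right N (Coprime.prod_left fun i _ => (coprime_add_mul_right_left x r i).mpr h)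

theorem prod_add_mul_dvd_factorial_mul_lcm {x r : ℕ} (hx : 0 < x) (hxr : Coprime x r) (m : ℕ) :
    ∏ i ∈ range (m + 1), (x + i * r) ∣ m ! * (range (m + 1)).lcm (fun i => x + i * r) := by
  set M := (range (m + 1)).lcm (fun i => x + i * r)
  set P := ∏ i ∈ range (m + 1), (x + i * r)
  set z : ℤ := (Δ_[1])^[m] (fun i : ℕ => ((M / (x + i * r) : ℕ) : ℤ)) 0
  have hzM : (z : ℚ) = M * (Δ_[1])^[m] (fun i : ℕ => ((x : ℚ) + i * r)⁻¹) 0 := by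
    simp only [z, fwdDiff_iter_eq_sum_shift, mul_sum, Int.cast_sum, zsmul_eq_mul, Int.cast_mul]
    refine sum_congr rfl fun i hi => ?_
    simp only [smul_eq_mul, mul_one, zero_add, Int.cast_natCast]
    rw [Nat.cast_div (dvd_lcm hi : x + i * r ∣ M) (by positivity)]
    push_cast
    ring
  have hzP : z * P = (-1) ^ m * (m ! * r ^ m * M : ℕ) := by
    rw [fwdDiff_iter_inv_add_mul _ _ (fun i => by positivity)] at hzM
    have : (z : ℚ) * P = (-1) ^ m * (m ! * r ^ m * M : ℕ) := by
      rw [hzM]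
      simp only [P, zero_add]
      push_cast
      field_simp
      ring_nf
    exact_mod_cast this
  have hdvd : P ∣ m ! * r ^ m * M := by
    rw [← Int.natCast_dvd_natCast, ← (isUnit_neg_one.pow m).dvd_mul_left]
    exact ⟨z, by rw [← hzP, mul_comm]⟩
  exact (hxr.prod_add_mul_pow _ m).dvd_of_dvd_mul_right (by rwa [mul_right_comm] at hdvd)

theorem prod_add_mul_mul_pow_dvd_factorial_mul_lcm {x r m N : ℕ} (hx : 0 < x) (hxr : Coprime x r)
    (hr : 0 < r) (hN : N * r ≤ m) :
    (∏ i ∈ range (m + 1), (x + i * r)) * r ^ N ∣ m ! * (range (m + 1)).lcm (fun i => x + i * r) :=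
  (hxr.prod_add_mul_pow _ N).mul_dvd_of_dvd_of_dvd (prod_add_mul_dvd_factorial_mul_lcm hx hxr m)
    (((pow_dvd_factorial_mul hr N).trans (factorial_dvd_factorial hN)).mul_right _)

theorem exists_factorial_mul_le_prod_add_mul {u0 r : ℕ} (hu0 : 0 < u0) (hr : 0 < r) (n : ℕ) :
    ∃ k m, k + m = n ∧ r * n < (r + 1) * m + r ∧
      m ! * (u0 * (r + 1) ^ n) ≤ ∏ i ∈ range (m + 1), (u0 + (k + i) * r) := by
  induction n with
  | zero => exact ⟨0, 0, rfl, by simpa using hr, by simp⟩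
  | succ n ih =>
    obtain ⟨k, m, rfl, hm, hP⟩ := ih
    by_cases hk : m < u0 + k * r
    · refine ⟨k, m + 1, by ring, by linarith, ?_⟩
      have hnext : (m + 1) * (r + 1) ≤ u0 + (k + (m + 1)) * r := by nlinarith
      calc (m + 1)! * (u0 * (r + 1) ^ (k + m + 1))
          = m ! * (u0 * (r + 1) ^ (k + m)) * ((m + 1) * (r + 1)) := by
            rw [factorial_succ]; ring
        _ ≤ (∏ i ∈ range (m + 1), (u0 + (k + i) * r)) * (u0 + (k + (m + 1)) * r) :=
            Nat.mul_le_mul hP hnext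
        _ = ∏ i ∈ range (m + 1 + 1), (u0 + (k + i) * r) := (prod_range_succ _ _).symm
    · refine ⟨k + 1, m, by ring, by nlinarith, ?_⟩
      have hnext : (r + 1) * (u0 + k * r) ≤ u0 + (k + (m + 1)) * r := by nlinarith
      have hshift : ∏ i ∈ range (m + 1 + 1), (u0 + (k + i) * r) =
          (∏ i ∈ range (m + 1), (u0 + (k + 1 + i) * r)) * (u0 + k * r) := by
        rw [prod_range_succ', add_zero]
        congr 1
        exact prod_congr rfl fun i _ => by ring
      refine Nat.le_of_mul_le_mul_right ?_ (by positivity : 0 < u0 + k * r)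
      calc m ! * (u0 * (r + 1) ^ (k + m + 1)) * (u0 + k * r)
          = m ! * (u0 * (r + 1) ^ (k + m)) * ((r + 1) * (u0 + k * r)) := by ring
        _ ≤ (∏ i ∈ range (m + 1), (u0 + (k + i) * r)) * (u0 + (k + (m + 1)) * r) :=
            Nat.mul_le_mul hP hnext
        _ = _ := by rw [← prod_range_succ, hshift]

theorem hong_kominers_bound (u0 r n a α : ℕ) (hu0 : 0 < u0)
    (hgcd : Nat.gcd u0 r = 1) (ha : 2 ≤ a) (hα : a ≤ α) (hr : a ≤ r)
    (hn : 2 * α * r ≤ n) :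
    Finset.lcm (Finset.range (n + 1)) (fun k => u0 + k * r) ≥
      u0 * r ^ (α + a - 2) * (r + 1) ^ n := by
  set L := Finset.lcm (Finset.range (n + 1)) (fun k => u0 + k * r)
  set N := α + a - 2
  have hN : N * (r + 1) ≤ 2 * α * r := by
    obtain ⟨b, rfl⟩ : ∃ b, a = b + 2 := ⟨a - 2, by omega⟩
    rw [show N = α + b by omega]
    nlinarith
  obtain ⟨k, m, hkm, hm, hP⟩ := exists_factorial_mul_le_prod_add_mul hu0 (by omega : 0 < r) n
  have hNm : N * r ≤ m := by
    by_contra! h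
    nlinarith
  have hlcm : (range (m + 1)).lcm (fun i => u0 + k * r + i * r) ∣ L := lcm_dvd fun i hi => by
    rw [show u0 + k * r + i * r = u0 + (k + i) * r by ring]
    exact dvd_lcm (by simp at hi ⊢; omega)
  have hdvd : (∏ i ∈ range (m + 1), (u0 + k * r + i * r)) * r ^ N ∣ m ! * L :=
    (prod_add_mul_mul_pow_dvd_factorial_mul_lcm (by positivity)
      ((coprime_add_mul_right_left u0 r k).mpr hgcd) (by omega)
      hNm).trans (Nat.mul_dvd_mul_left _ hlcm)
  have hL : 0 < L := Nat.pos_of_ne_zero <| by simp [L, Finset.lcm_eq_zero_iff]; omega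
  refine Nat.le_of_mul_le_mul_left ?_ (factorial_pos m)
  calc m ! * (u0 * r ^ N * (r + 1) ^ n) = m ! * (u0 * (r + 1) ^ n) * r ^ N := by ring
    _ ≤ (∏ i ∈ range (m + 1), (u0 + k * r + i * r)) * r ^ N :=
      Nat.mul_le_mul_right _ (hP.trans_eq (prod_congr rfl fun i _ => by ring))
    _ ≤ m ! * L := Nat.le_of_dvd (by positivity) hdvd
end
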